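/- Sufficient condition for sample-efficiency gain: under the setting of the sample-efficiency ratio formula, if F_ξ ≥ F_μ and b_ξ² + (ε̄ − b_μ²)·(b'_ξ+1)²/(b'_μ+1)² ≤ ε̄ + Δ, where ε̄ = ε − V_μ, then n/m ≥ 1. -/

import Mathlib

theorem one_le_div_div_of_mul_div_le {a b x y : ℝ} (ha : 0 < a) (hb : 0 < b) (hx : 0 < x)
    (h : x * (b / a) ≤ y) : 1 ≤ (a / x) / (b / y) := by
  have hy : 0 < y := (by positivity : 0 < x * (b / a)).trans_le h
  rw [mul_div_assoc', div_le_iff₀ ha] at h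
  rw [one_le_div (by positivity), div_le_div_iff₀ hy hx]
  linarith

theorem sample_efficiency_gain_sufficient_general
    (Fμ Fξ Vμ Vξ bμ bξ bμ' bξ' ε Δ n m : ℝ)
    (hFμ : 0 < Fμ) (hFle : Fμ ≤ Fξ)
    (hΔ : Δ = Vμ - Vξ)
    (hbμ' : bμ' + 1 ≠ 0) (hbξ' : bξ' + 1 ≠ 0)
    (hεμ : 0 < (ε - Vμ) - bμ ^ 2)
    (hn : n = (bμ' + 1) ^ 2 / (Fμ * (ε - Vμ - bμ ^ 2)))
    (hm : m = (bξ' + 1) ^ 2 / (Fξ * (ε - Vξ - bξ ^ 2)))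
    (hcond : bξ ^ 2 + ((ε - Vμ) - bμ ^ 2) * ((bξ' + 1) ^ 2 / (bμ' + 1) ^ 2)
        ≤ (ε - Vμ) + Δ) :
    1 ≤ n / m := by
  have hbias : (ε - Vμ - bμ ^ 2) * ((bξ' + 1) ^ 2 / (bμ' + 1) ^ 2) ≤ ε - Vξ - bξ ^ 2 := by
    subst hΔ
    linarith
  have hfisher : Fμ * (ε - Vμ - bμ ^ 2) * ((bξ' + 1) ^ 2 / (bμ' + 1) ^ 2)
      ≤ Fξ * (ε - Vξ - bξ ^ 2) := by
    rw [mul_assoc]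
    exact mul_le_mul hFle hbias (by positivity) (hFμ.le.trans hFle)
  rw [hn, hm]
  exact one_le_div_div_of_mul_div_le (by positivity) (by positivity) (mul_pos hFμ hεμ) hfisher

/-- Sufficient condition for a sample-efficiency gain: in the setting of the
sample-efficiency ratio formula, if `F_ξ ≥ F_μ` and
`b_ξ² + (ε̄ − b_μ²)·(b'_ξ+1)²/(b'_μ+1)² ≤ ε̄ + Δ` with `ε̄ = ε − V_μ`,
then `n/m ≥ 1`. -/
theorem sample_efficiency_gain_sufficient
    (Fμ Fξ Vμ Vξ bμ bξ bμ' bξ' ε Δ n m : ℝ)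
    (hFμ : 0 < Fμ) (hFξ : 0 < Fξ) (hFle : Fμ ≤ Fξ)
    (hΔ : Δ = Vμ - Vξ) (hΔ0 : 0 ≤ Δ)
    (hbμ' : bμ' + 1 ≠ 0) (hbξ' : bξ' + 1 ≠ 0)
    (hεμ : 0 < (ε - Vμ) - bμ ^ 2) (hεξ : 0 < ε - Vξ - bξ ^ 2)
    (hn : n = (bμ' + 1) ^ 2 / (Fμ * (ε - Vμ - bμ ^ 2)))
    (hm : m = (bξ' + 1) ^ 2 / (Fξ * (ε - Vξ - bξ ^ 2)))
    (hcond : bξ ^ 2 + ((ε - Vμ) - bμ ^ 2) * ((bξ' + 1) ^ 2 / (bμ' + 1) ^ 2)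
        ≤ (ε - Vμ) + Δ) :
    1 ≤ n / m :=
  sample_efficiency_gain_sufficient_general Fμ Fξ Vμ Vξ bμ bξ bμ' bξ' ε Δ n m hFμ hFle hΔ hbμ' hbξ'
    hεμ hn hm hcond
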